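/- For every n ≥ 1 and every positive φ : ZMod n → ℝ, the coarea quadratic form Q on ℝ^{ZMod n} is positive definite: Q(h) > 0 for every h ≠ 0. (Proposition 5.1 of the paper: the symmetric bilinear form coarea is positive definite.) -/
import Mathlib


/-- The coarea quadratic form on `ℝ^{ZMod n}` associated to the angles `φ : ZMod n → ℝ`. -/
noncomputable def coarea (n : ℕ) [NeZero n] (φ : ZMod n → ℝ) (h : ZMod n → ℝ) : ℝ :=
  (1 / 2) * ∑ i : ZMod n,
    h i * ((h i * Real.cosh (φ (i - 1)) - h (i - 1)) / Real.sinh (φ (i - 1))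
      + (h i * Real.cosh (φ i) - h (i + 1)) / Real.sinh (φ i))

lemma coarea_eq (n : ℕ) [NeZero n] (φ : ZMod n → ℝ) (h : ZMod n → ℝ) :
    coarea n φ h = (1 / 2) * ∑ i : ZMod n,
      (Real.cosh (φ i) * ((h i) ^ 2 + (h (i + 1)) ^ 2) - 2 * h i * h (i + 1))
        / Real.sinh (φ i) := by
  unfold coarea
  congr 1
  have key : ∑ i : ZMod n, h i * ((h i * Real.cosh (φ (i - 1)) - h (i - 1))
        / Real.sinh (φ (i - 1)))
      = ∑ i : ZMod n, h (i + 1) * ((h (i + 1) * Real.cosh (φ i) - h i)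
        / Real.sinh (φ i)) := by
    rw [← Equiv.sum_comp (Equiv.addRight (1 : ZMod n))
      (fun i => h i * ((h i * Real.cosh (φ (i - 1)) - h (i - 1)) / Real.sinh (φ (i - 1))))]
    exact Finset.sum_congr rfl fun i _ => by simp
  rw [show (∑ i : ZMod n,
      h i * ((h i * Real.cosh (φ (i - 1)) - h (i - 1)) / Real.sinh (φ (i - 1))
        + (h i * Real.cosh (φ i) - h (i + 1)) / Real.sinh (φ i)))
      = (∑ i : ZMod n, h i * ((h i * Real.cosh (φ (i - 1)) - h (i - 1))
          / Real.sinh (φ (i - 1))))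
        + ∑ i : ZMod n, h i * ((h i * Real.cosh (φ i) - h (i + 1)) / Real.sinh (φ i)) by
    rw [← Finset.sum_add_distrib]; exact Finset.sum_congr rfl fun i _ => by ring,
    key, ← Finset.sum_add_distrib]
  exact Finset.sum_congr rfl fun i _ => by ring

/-- Proposition 5.1 of the paper: the coarea quadratic form is positive definite. -/
theorem coarea_pos_def (n : ℕ) [NeZero n] (φ : ZMod n → ℝ) (hφ : ∀ i, 0 < φ i)
    (h : ZMod n → ℝ) (hne : h ≠ 0) :
    0 < coarea n φ h := by
  rw [coarea_eq]
  have hc : ∀ i, 1 < Real.cosh (φ i) := fun i =>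
    Real.one_lt_cosh.mpr (ne_of_gt (hφ i))
  have hs : ∀ i, 0 < Real.sinh (φ i) := fun i => Real.sinh_pos_iff.mpr (hφ i)
  have hpos : 0 < ∑ i : ZMod n,
      (Real.cosh (φ i) * ((h i) ^ 2 + (h (i + 1)) ^ 2) - 2 * h i * h (i + 1))
        / Real.sinh (φ i) := by
    obtain ⟨j, hj⟩ : ∃ j, h j ≠ 0 := by
      by_contra hcon
      push_neg at hcon
      exact hne (funext hcon)
    refine Finset.sum_pos' (fun i _ => ?_) ⟨j, Finset.mem_univ j, ?_⟩
    · apply div_nonneg _ (le_of_lt (hs i))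
      nlinarith [sq_nonneg (h i - h (i + 1)), sq_nonneg (h i), sq_nonneg (h (i + 1)),
        (hc i).le]
    · apply div_pos _ (hs j)
      have hj2 : 0 < (h j) ^ 2 := by positivity
      nlinarith [sq_nonneg (h j - h (j + 1)), sq_nonneg (h (j + 1)), hc j]
  linarith
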